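/- Let η ∈ C_c^∞(R^n) and define η_t by (η(t·))^∨. Then there exists a constant C such that for all f ∈ L^1_loc(R^n) with f − B_t f locally integrable, all t ∈ (0,1) and x ∈ R^n: (1/|B(x,t)|)∫_{B(x,t)} |(η(t·))^∨ * g(y)| dy ≤ C M((1/|B(·,t)|)∫_{B(·,t)} |g(z)| dz)(x) for any g ∈ L^1_loc(R^n) with suitable decay, where M is the Hardy–Littlewood maximal operator. -/

import Mathlib

set_option maxHeartbeats 1000000

open MeasureTheory Metric
open scoped ENNReal NNReal FourierTransform

/-- The (uncentered) Hardy–Littlewood maximal function. -/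
noncomputable def maxFn {n : ℕ} {F : Type*} [NormedAddCommGroup F]
    (f : EuclideanSpace ℝ (Fin n) → F) (x : EuclideanSpace ℝ (Fin n)) : ℝ≥0∞ :=
  ⨆ (z : EuclideanSpace ℝ (Fin n)) (r : ℝ) (_ : 0 < r) (_ : x ∈ ball z r),
    ⨍⁻ y in ball z r, (‖f y‖₊ : ℝ≥0∞) ∂volume

variable {n : ℕ}

local notation "E" => EuclideanSpace ℝ (Fin n)

/-- A compactly supported smooth function as a Schwartz map. -/
noncomputable def toSchwartz (η : E → ℂ) (hη : ContDiff ℝ (⊤ : ℕ∞) η) (hηc : HasCompactSupport η) :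
    SchwartzMap E ℂ where
  toFun := η
  smooth' := hη.of_le (by simp)
  decay' := by
    intro k m
    have h1 : HasCompactSupport (fun x : E => ‖x‖ ^ k • iteratedFDeriv ℝ m η x) := by
      apply (hηc.iteratedFDeriv (𝕜 := ℝ) m).mono
      intro x hx
      simp only [Function.mem_support, ne_eq] at hx ⊢
      intro h; exact hx (by simp [h])
    have h2 : Continuous (fun x : E => ‖x‖ ^ k • iteratedFDeriv ℝ m η x) :=
      ((continuous_norm.pow k)).smul (hη.continuous_iteratedFDeriv (by exact_mod_cast le_top))
    obtain ⟨C, hC⟩ := h1.exists_bound_of_continuous h2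
    refine ⟨C, fun x => ?_⟩
    have := hC x
    rwa [norm_smul, norm_pow, norm_norm] at this

lemma schwartz_decay_bound (ψ : SchwartzMap E ℂ) :
    ∃ D : ℝ, 0 < D ∧ ∀ u : E, ‖ψ u‖ ≤ D / (max 1 ‖u‖) ^ (n + 1) := by
  obtain ⟨C0, hC0pos, hC0⟩ := ψ.decay 0 0
  obtain ⟨C1, hC1pos, hC1⟩ := ψ.decay (n + 1) 0
  refine ⟨max C0 C1 + 1, by positivity, fun u => ?_⟩
  have h0 : ‖ψ u‖ ≤ C0 := by simpa using hC0 u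
  have h1 : ‖u‖ ^ (n + 1) * ‖ψ u‖ ≤ C1 := by simpa using hC1 u
  rcases le_total ‖u‖ 1 with h | h
  · rw [max_eq_left h, one_pow]
    calc ‖ψ u‖ ≤ C0 := h0
    _ ≤ (max C0 C1 + 1) / 1 := by rw [div_one]; nlinarith [le_max_left C0 C1]
  · rw [max_eq_right h]
    rw [le_div_iff₀ (by positivity), mul_comm]
    nlinarith [le_max_right C0 C1, norm_nonneg (ψ u), pow_nonneg (norm_nonneg u) (n+1),
      one_le_pow₀ (n := n+1) h]

open scoped RealInnerProductSpace

lemma fourierInv_comp_smul (f : E → ℂ) {t : ℝ} (ht : 0 < t) (z : E) :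
    (𝓕⁻ fun ξ : E => f (t • ξ)) z = (t ^ n)⁻¹ • (𝓕⁻ f) (t⁻¹ • z) := by
  rw [Real.fourierInv_eq, Real.fourierInv_eq]
  have key : (fun ξ : E => (𝐞 ⟪ξ, z⟫ : Circle) • f (t • ξ))
      = fun ξ : E => (fun u : E => (𝐞 ⟪u, t⁻¹ • z⟫ : Circle) • f u) (t • ξ) := by
    funext ξ
    simp only
    congr 2
    rw [real_inner_smul_left, real_inner_smul_right]
    field_simp
  rw [key]
  have h2 := MeasureTheory.Measure.integral_comp_smul volume
    (fun u : E => (𝐞 ⟪u, t⁻¹ • z⟫ : Circle) • f u) t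
  rw [finrank_euclideanSpace_fin] at h2
  rw [h2]
  congr 1
  rw [abs_of_nonneg (by positivity)]

lemma nnnorm_avg_eq (g : E → ℂ) (hg : Integrable g volume) {t : ℝ} (ht : 0 < t) (w : E) :
    (‖⨍ z in ball w t, ‖g z‖ ∂volume‖₊ : ℝ≥0∞)
      = (∫⁻ z in ball w t, (‖g z‖₊ : ℝ≥0∞) ∂volume) / volume (ball w t) := by
  have hV0 : volume (ball w t) ≠ 0 := (measure_ball_pos volume w ht).ne'
  have hVtop : volume (ball w t) ≠ ⊤ := measure_ball_lt_top.ne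
  rw [setAverage_eq, measureReal_def]
  have hnonneg : (0:ℝ) ≤ (volume (ball w t)).toReal⁻¹ * ∫ z in ball w t, ‖g z‖ ∂volume := by
    have : (0:ℝ) ≤ ∫ z in ball w t, ‖g z‖ ∂volume :=
      integral_nonneg fun z => norm_nonneg _
    positivity
  rw [smul_eq_mul, ← enorm_eq_nnnorm, Real.enorm_eq_ofReal hnonneg,
    ENNReal.ofReal_mul (by positivity),
    ofReal_integral_norm_eq_lintegral_enorm hg.integrableOn,
    ENNReal.ofReal_inv_of_pos (ENNReal.toReal_pos hV0 hVtop),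
    ENNReal.ofReal_toReal hVtop, ENNReal.div_eq_inv_mul.symm]
  rfl

lemma lintegral_ball_le_maximal (g : E → ℂ) (hg : Integrable g volume)
    (hgm : Measurable g) {t R : ℝ} (ht : 0 < t) (htR : t ≤ R)
    {x y : E} (hxy : y ∈ ball x t) :
    ∫⁻ u in ball y R, (‖g u‖₊ : ℝ≥0∞) ∂volume ≤
      volume (ball y (R + t)) *
        maxFn (fun w : E => ⨍ z in ball w t, ‖g z‖ ∂volume) x := by
  set ρ : ℝ := R + t with hρdef
  have hρ : 0 < ρ := by rw [hρdef]; linarith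
  have hVρ0 : volume (ball y ρ) ≠ 0 := (measure_ball_pos volume y hρ).ne'
  have hVρtop : volume (ball y ρ) ≠ ⊤ := measure_ball_lt_top.ne
  set Vt : ℝ≥0∞ := volume (ball (0 : E) t) with hVtdef
  have hVt0 : Vt ≠ 0 := (measure_ball_pos volume _ ht).ne'
  have hVttop : Vt ≠ ⊤ := measure_ball_lt_top.ne
  have hx : x ∈ ball y ρ := by
    rw [mem_ball] at hxy ⊢
    rw [dist_comm]
    linarith
  -- step 1: the average over ball y ρ is below the maximal function
  have h1 : (⨍⁻ w in ball y ρ, (‖⨍ z in ball w t, ‖g z‖ ∂volume‖₊ : ℝ≥0∞) ∂volume)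
      ≤ maxFn (fun w : E => ⨍ z in ball w t, ‖g z‖ ∂volume) x := by
    apply le_iSup_of_le y
    apply le_iSup_of_le ρ
    apply le_iSup_of_le hρ
    exact le_iSup_of_le hx le_rfl
  -- step 2: rewrite the average
  set B : ℝ≥0∞ :=
    ∫⁻ w in ball y ρ, (∫⁻ z in ball w t, (‖g z‖₊ : ℝ≥0∞) ∂volume) ∂volume with hBdef
  have h2 : (⨍⁻ w in ball y ρ, (‖⨍ z in ball w t, ‖g z‖ ∂volume‖₊ : ℝ≥0∞) ∂volume)
      = (B * Vt⁻¹) / volume (ball y ρ) := by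
    rw [setLAverage_eq]
    congr 1
    rw [hBdef, ← lintegral_mul_const' Vt⁻¹ _ (ENNReal.inv_ne_top.2 hVt0)]
    apply lintegral_congr fun w => ?_
    rw [nnnorm_avg_eq g hg ht w, Measure.addHaar_ball_center volume w t,
      ENNReal.div_eq_inv_mul, mul_comm]
  -- step 3: Tonelli lower bound
  have h3 : (∫⁻ z in ball y R, (‖g z‖₊ : ℝ≥0∞) ∂volume) * Vt ≤ B := by
    have hrw : ∀ w : E, (∫⁻ z in ball w t, (‖g z‖₊ : ℝ≥0∞) ∂volume)
        = ∫⁻ z, (‖g z‖₊ : ℝ≥0∞) * (ball z t).indicator 1 w ∂volume := by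
      intro w
      rw [← lintegral_indicator measurableSet_ball]
      apply lintegral_congr fun z => ?_
      by_cases h : z ∈ ball w t
      · rw [Set.indicator_of_mem h, Set.indicator_of_mem (mem_ball_comm.1 h)]
        simp
      · rw [Set.indicator_of_notMem h,
          Set.indicator_of_notMem (fun hh => h (mem_ball_comm.1 hh))]
        simp
    have hmeas : Measurable fun p : E × E =>
        (‖g p.2‖₊ : ℝ≥0∞) * (ball p.2 t).indicator 1 p.1 := by
      have hs : MeasurableSet {p : E × E | dist p.1 p.2 < t} :=
        measurableSet_lt (by fun_prop) measurable_const
      have hm1 : Measurable fun p : E × E => (‖g p.2‖₊ : ℝ≥0∞) :=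
        (hgm.comp measurable_snd).enorm
      have hm2 : (fun p : E × E => (ball p.2 t).indicator (1 : E → ℝ≥0∞) p.1)
          = {p : E × E | dist p.1 p.2 < t}.indicator 1 := by
        funext p
        by_cases h : dist p.1 p.2 < t
        · simp [Set.indicator_apply, mem_ball, h]
        · simp [Set.indicator_apply, mem_ball, h]
      exact hm1.mul (hm2 ▸ (measurable_const.indicator hs))
    have hswap : B = ∫⁻ z, (‖g z‖₊ : ℝ≥0∞) * volume (ball z t ∩ ball y ρ) ∂volume := by
      rw [hBdef]
      calc ∫⁻ w in ball y ρ, (∫⁻ z in ball w t, (‖g z‖₊ : ℝ≥0∞) ∂volume) ∂volume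
          = ∫⁻ w in ball y ρ,
              (∫⁻ z, (‖g z‖₊ : ℝ≥0∞) * (ball z t).indicator 1 w ∂volume) ∂volume := by
            exact lintegral_congr fun w => hrw w
        _ = ∫⁻ z, (∫⁻ w in ball y ρ,
              (‖g z‖₊ : ℝ≥0∞) * (ball z t).indicator 1 w ∂volume) ∂volume := by
            exact lintegral_lintegral_swap hmeas.aemeasurable
        _ = ∫⁻ z, (‖g z‖₊ : ℝ≥0∞) * volume (ball z t ∩ ball y ρ) ∂volume := by
            apply lintegral_congr fun z => ?_
            rw [lintegral_const_mul' _ _ ENNReal.coe_ne_top]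
            congr 1
            rw [lintegral_indicator_one measurableSet_ball,
              Measure.restrict_apply measurableSet_ball]
    rw [hswap]
    calc (∫⁻ z in ball y R, (‖g z‖₊ : ℝ≥0∞) ∂volume) * Vt
        = ∫⁻ z in ball y R, (‖g z‖₊ : ℝ≥0∞) * Vt ∂volume := by
          rw [lintegral_mul_const' Vt _ hVttop]
      _ ≤ ∫⁻ z in ball y R, (‖g z‖₊ : ℝ≥0∞) * volume (ball z t ∩ ball y ρ) ∂volume := by
          apply setLIntegral_mono' measurableSet_ball
          intro z hz
          apply mul_le_mul_right
          have hsub : ball z t ⊆ ball y ρ := by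
            intro u hu
            rw [mem_ball] at hu hz ⊢
            calc dist u y ≤ dist u z + dist z y := dist_triangle u z y
              _ < t + R := by linarith
              _ = ρ := by rw [hρdef]; ring
          rw [Set.inter_eq_left.2 hsub, Measure.addHaar_ball_center volume z t]
      _ ≤ ∫⁻ z, (‖g z‖₊ : ℝ≥0∞) * volume (ball z t ∩ ball y ρ) ∂volume :=
          setLIntegral_le_lintegral _ _
  -- conclude
  calc ∫⁻ u in ball y R, (‖g u‖₊ : ℝ≥0∞) ∂volume
      = (∫⁻ u in ball y R, (‖g u‖₊ : ℝ≥0∞) ∂volume) * Vt * Vt⁻¹ := by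
        rw [mul_assoc, ENNReal.mul_inv_cancel hVt0 hVttop, mul_one]
    _ ≤ B * Vt⁻¹ := mul_le_mul_left h3 _
    _ = volume (ball y ρ) * ((B * Vt⁻¹) / volume (ball y ρ)) := by
        rw [ENNReal.mul_div_cancel hVρ0 hVρtop]
    _ ≤ volume (ball y ρ) * maxFn (fun w : E => ⨍ z in ball w t, ‖g z‖ ∂volume) x := by
        apply mul_le_mul_right
        rw [← h2]
        exact h1

lemma lintegral_sub_left (h : E → ℝ≥0∞) (y : E) (R : ℝ) :
    ∫⁻ z in ball (0 : E) R, h (y - z) ∂volume = ∫⁻ u in ball y R, h u ∂volume := by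
  have hmp : MeasurePreserving (fun z : E => y - z) volume volume :=
    Measure.measurePreserving_sub_left volume y
  have hemb : MeasurableEmbedding (fun z : E => y - z) :=
    (MeasurableEquiv.subLeft y).measurableEmbedding
  have hset : (fun z : E => y - z) ⁻¹' ball y R = ball (0 : E) R := by
    ext z
    simp only [Set.mem_preimage, mem_ball, dist_eq_norm]
    rw [show y - z - y = -z by abel, norm_neg, sub_zero]
  rw [← hset]
  exact hmp.setLIntegral_comp_preimage_emb hemb h (ball y R)

lemma kernel_bound (η : E → ℂ) (hη : ContDiff ℝ (⊤ : ℕ∞) η) (hηc : HasCompactSupport η) :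
    ∃ D : ℝ, 0 < D ∧ ∀ t ∈ Set.Ioo (0:ℝ) 1, ∀ z : E,
      ‖(𝓕⁻ fun ξ : E => η (t • ξ)) z‖ ≤ D / t ^ n / (max 1 (‖z‖ / t)) ^ (n + 1) := by
  set ηS : SchwartzMap E ℂ := toSchwartz η hη hηc with hηS
  set ψ : SchwartzMap E ℂ := (FourierTransform.fourierCLE ℝ (SchwartzMap E ℂ)).symm ηS with hψ
  have hψeq : ∀ u : E, ψ u = (𝓕⁻ fun v : E => η v) u := by
    intro u
    rw [hψ]
    rw [FourierTransform.fourierCLE_symm_apply, SchwartzMap.fourierInv_coe]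
    rfl
  obtain ⟨D, hD, hDb⟩ := schwartz_decay_bound ψ
  refine ⟨D, hD, fun t ht z => ?_⟩
  have ht0 : 0 < t := ht.1
  rw [fourierInv_comp_smul η ht0 z]
  have h1 : ‖(t ^ n)⁻¹ • (𝓕⁻ fun v : E => η v) (t⁻¹ • z)‖
      = (t ^ n)⁻¹ * ‖ψ (t⁻¹ • z)‖ := by
    rw [norm_smul, hψeq, Real.norm_eq_abs, abs_of_nonneg (by positivity)]
  rw [h1]
  have h2 : ‖(t⁻¹ • z : EuclideanSpace ℝ (Fin n))‖ = ‖z‖ / t := by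
    rw [norm_smul, Real.norm_eq_abs, abs_of_nonneg (by positivity), div_eq_inv_mul]
  have h3 := hDb (t⁻¹ • z)
  rw [h2] at h3
  have hX : (0:ℝ) < (max 1 (‖z‖ / t)) ^ (n + 1) := by positivity
  calc (t ^ n)⁻¹ * ‖ψ (t⁻¹ • z)‖
      ≤ (t ^ n)⁻¹ * (D / (max 1 (‖z‖ / t)) ^ (n + 1)) := by
        apply mul_le_mul_of_nonneg_left h3 (by positivity)
    _ = D / t ^ n / (max 1 (‖z‖ / t)) ^ (n + 1) := by
        field_simp

lemma conv_pointwise_bound (g : E → ℂ) (hg : Integrable g volume) (hgm : Measurable g)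
    {t : ℝ} (ht0 : 0 < t) {D : ℝ} (hD : 0 < D)
    (k : E → ℂ)
    (hk : ∀ z : E, ‖k z‖ ≤ D / t ^ n / (max 1 (‖z‖ / t)) ^ (n + 1))
    {x y : E} (hxy : y ∈ ball x t) :
    (‖∫ z, k z * g (y - z)‖₊ : ℝ≥0∞) ≤
      ENNReal.ofReal (D * 4 ^ n) * 2 * (volume (ball (0:E) 1) *
        maxFn (fun w : E => ⨍ z in ball w t, ‖g z‖ ∂volume) x) := by
  set M : ℝ≥0∞ := maxFn (fun w : E => ⨍ z in ball w t, ‖g z‖ ∂volume) x with hM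
  set V1 : ℝ≥0∞ := volume (ball (0:E) 1) with hV1
  set c : ℕ → ℝ≥0∞ := fun j => ENNReal.ofReal (D / t ^ n / ((2:ℝ) ^ j) ^ (n + 1)) with hc
  have hgm' : Measurable fun z : E => (‖g (y - z)‖₊ : ℝ≥0∞) :=
    (hgm.comp (measurable_const.sub measurable_id)).enorm
  have hindmul : ∀ (s : Set E) (h : E → ℝ≥0∞) (z : E),
      s.indicator 1 z * h z = s.indicator h z := by
    intro s h z
    by_cases hz : z ∈ s <;> simp [hz]
  -- pointwise kernel bound by a sum of indicators
  have hpt : ∀ z : E, (‖k z‖₊ : ℝ≥0∞) ≤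
      ∑' j : ℕ, c j * (ball (0:E) ((2:ℝ) ^ (j+1) * t)).indicator 1 z := by
    intro z
    obtain ⟨j, hj1, hj2⟩ : ∃ j : ℕ, (2:ℝ) ^ j ≤ max 1 (‖z‖ / t) ∧ ‖z‖ < 2 ^ (j+1) * t := by
      rcases le_or_gt (‖z‖ / t) 1 with hz | hz
      · refine ⟨0, by simp, ?_⟩
        have h1 : ‖z‖ ≤ t := by rwa [div_le_one ht0] at hz
        have : (2:ℝ) ^ (0+1) * t = 2 * t := by norm_num
        rw [this]
        linarith
      · obtain ⟨m, hm⟩ := exists_mem_Ico_zpow (x := ‖z‖ / t) (by linarith) one_lt_two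
        obtain ⟨hm1, hm2⟩ := hm
        have hm0 : 0 ≤ m := by
          by_contra hneg
          push_neg at hneg
          have h1 : (2:ℝ) ^ (m+1) ≤ 2 ^ (0:ℤ) := by
            apply zpow_le_zpow_right₀ one_le_two (by omega)
          rw [zpow_zero] at h1
          linarith
        have hcast : ((2:ℝ)) ^ m.toNat = (2:ℝ) ^ (m : ℤ) := by
          rw [← zpow_natCast, Int.toNat_of_nonneg hm0]
        refine ⟨m.toNat, ?_, ?_⟩
        · rw [le_max_iff]
          right
          rw [hcast]
          exact hm1
        · have h2 : ‖z‖ / t < 2 ^ (m.toNat + 1) := by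
            have : ((2:ℝ)) ^ (m.toNat + 1) = (2:ℝ) ^ ((m : ℤ) + 1) := by
              rw [← zpow_natCast]
              push_cast [Int.toNat_of_nonneg hm0]
              ring_nf
            rw [this]
            exact hm2
          rwa [div_lt_iff₀ ht0] at h2
    have hzmem : z ∈ ball (0:E) ((2:ℝ) ^ (j+1) * t) := by
      rw [mem_ball_zero_iff]
      exact hj2
    calc (‖k z‖₊ : ℝ≥0∞) = ENNReal.ofReal ‖k z‖ := (ofReal_norm _).symm
      _ ≤ c j := by
          apply ENNReal.ofReal_le_ofReal
          calc ‖k z‖ ≤ D / t ^ n / (max 1 (‖z‖ / t)) ^ (n + 1) := hk z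
            _ ≤ D / t ^ n / ((2:ℝ) ^ j) ^ (n + 1) := by
                apply div_le_div_of_nonneg_left (by positivity) (by positivity)
                exact pow_le_pow_left₀ (by positivity) hj1 _
      _ = c j * (ball (0:E) ((2:ℝ) ^ (j+1) * t)).indicator 1 z := by
          rw [Set.indicator_of_mem hzmem]
          simp
      _ ≤ _ := ENNReal.le_tsum j
  -- main calculation
  calc (‖∫ z, k z * g (y - z)‖₊ : ℝ≥0∞)
      ≤ ∫⁻ z, (‖k z * g (y - z)‖₊ : ℝ≥0∞) ∂volume :=
        enorm_integral_le_lintegral_enorm _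
    _ = ∫⁻ z, (‖k z‖₊ : ℝ≥0∞) * (‖g (y - z)‖₊ : ℝ≥0∞) ∂volume := by
        apply lintegral_congr fun z => ?_
        rw [nnnorm_mul, ENNReal.coe_mul]
    _ ≤ ∫⁻ z, (∑' j : ℕ, c j * (ball (0:E) ((2:ℝ) ^ (j+1) * t)).indicator 1 z)
          * (‖g (y - z)‖₊ : ℝ≥0∞) ∂volume := by
        apply lintegral_mono fun z => ?_
        exact mul_le_mul_left (hpt z) _
    _ = ∑' j : ℕ, c j * ∫⁻ z in ball (0:E) ((2:ℝ) ^ (j+1) * t),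
          (‖g (y - z)‖₊ : ℝ≥0∞) ∂volume := by
        have h1 : ∀ z : E, (∑' j : ℕ, c j * (ball (0:E) ((2:ℝ) ^ (j+1) * t)).indicator 1 z)
            * (‖g (y - z)‖₊ : ℝ≥0∞)
            = ∑' j : ℕ, c j * ((ball (0:E) ((2:ℝ) ^ (j+1) * t)).indicator 1 z
                * (‖g (y - z)‖₊ : ℝ≥0∞)) := by
          intro z
          rw [← ENNReal.tsum_mul_right]
          apply tsum_congr fun j => ?_
          rw [mul_assoc]
        simp only [h1]
        rw [lintegral_tsum]
        · apply tsum_congr fun j => ?_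
          rw [lintegral_const_mul' _ _ ENNReal.ofReal_ne_top]
          congr 1
          have h2 : ∀ z : E, (ball (0:E) ((2:ℝ) ^ (j+1) * t)).indicator 1 z
              * (‖g (y - z)‖₊ : ℝ≥0∞)
              = (ball (0:E) ((2:ℝ) ^ (j+1) * t)).indicator
                  (fun z => (‖g (y - z)‖₊ : ℝ≥0∞)) z :=
            fun z => hindmul _ (fun z => (‖g (y - z)‖₊ : ℝ≥0∞)) z
          simp only [h2]
          rw [lintegral_indicator measurableSet_ball]
        · intro j
          exact (((measurable_one.indicator measurableSet_ball).mul hgm').const_mul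
            (c j)).aemeasurable
    _ = ∑' j : ℕ, c j * ∫⁻ u in ball y ((2:ℝ) ^ (j+1) * t), (‖g u‖₊ : ℝ≥0∞) ∂volume := by
        apply tsum_congr fun j => ?_
        rw [lintegral_sub_left (fun u => (‖g u‖₊ : ℝ≥0∞)) y]
    _ ≤ ∑' j : ℕ, c j * (volume (ball y ((2:ℝ) ^ (j+2) * t)) * M) := by
        apply ENNReal.tsum_le_tsum fun j => ?_
        apply mul_le_mul_right
        have htR : t ≤ (2:ℝ) ^ (j+1) * t := by
          nlinarith [one_le_pow₀ (M₀ := ℝ) (n := j+1) one_le_two, ht0]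
        calc ∫⁻ u in ball y ((2:ℝ) ^ (j+1) * t), (‖g u‖₊ : ℝ≥0∞) ∂volume
            ≤ volume (ball y ((2:ℝ) ^ (j+1) * t + t)) * M :=
              lintegral_ball_le_maximal g hg hgm ht0 htR hxy
          _ ≤ volume (ball y ((2:ℝ) ^ (j+2) * t)) * M := by
              apply mul_le_mul_left
              apply measure_mono
              apply ball_subset_ball
              have : (2:ℝ) ^ (j+2) = 2 ^ (j+1) + 2 ^ (j+1) := by ring
              nlinarith [one_le_pow₀ (M₀ := ℝ) (n := j+1) one_le_two, ht0]
    _ = ∑' j : ℕ, (ENNReal.ofReal (D * 4 ^ n) * (V1 * M)) * ((2:ℝ≥0∞)⁻¹) ^ j := by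
        apply tsum_congr fun j => ?_
        have hrpos : (0:ℝ) < (2:ℝ) ^ (j+2) * t := by positivity
        have hvol : volume (ball y ((2:ℝ) ^ (j+2) * t))
            = ENNReal.ofReal (((2:ℝ) ^ (j+2) * t) ^ n) * V1 := by
          rw [Measure.addHaar_ball_of_pos volume y hrpos, finrank_euclideanSpace_fin]
        rw [hvol, hc]
        have hcomb : ENNReal.ofReal (D / t ^ n / ((2:ℝ) ^ j) ^ (n + 1))
              * ENNReal.ofReal (((2:ℝ) ^ (j+2) * t) ^ n)
            = ENNReal.ofReal (D * 4 ^ n * ((2:ℝ)⁻¹) ^ j) := by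
          rw [← ENNReal.ofReal_mul (by positivity)]
          congr 1
          have h2j : ((2:ℝ) ^ j) ≠ 0 := by positivity
          have htn : (t:ℝ) ^ n ≠ 0 := by positivity
          rw [pow_succ ((2:ℝ) ^ j) n,
            show (2:ℝ) ^ (j+2) = 2 ^ j * 4 by rw [pow_add]; norm_num,
            mul_pow, mul_pow, inv_pow]
          field_simp
        have hofr : ENNReal.ofReal (D * 4 ^ n * ((2:ℝ)⁻¹) ^ j)
            = ENNReal.ofReal (D * 4 ^ n) * ((2:ℝ≥0∞)⁻¹) ^ j := by
          have h2inv : (2:ℝ≥0∞)⁻¹ = ENNReal.ofReal (2⁻¹:ℝ) := by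
            rw [ENNReal.ofReal_inv_of_pos (by norm_num : (0:ℝ) < 2)]
            rw [ENNReal.ofReal_ofNat]
          rw [ENNReal.ofReal_mul (by positivity : (0:ℝ) ≤ D * 4 ^ n), h2inv,
            ← ENNReal.ofReal_pow (by norm_num : (0:ℝ) ≤ (2⁻¹:ℝ))]
        calc ENNReal.ofReal (D / t ^ n / ((2:ℝ) ^ j) ^ (n + 1))
              * (ENNReal.ofReal (((2:ℝ) ^ (j+2) * t) ^ n) * V1 * M)
            = (ENNReal.ofReal (D / t ^ n / ((2:ℝ) ^ j) ^ (n + 1))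
                * ENNReal.ofReal (((2:ℝ) ^ (j+2) * t) ^ n)) * (V1 * M) := by ring
          _ = (ENNReal.ofReal (D * 4 ^ n) * ((2:ℝ≥0∞)⁻¹) ^ j) * (V1 * M) := by
              rw [hcomb, hofr]
          _ = (ENNReal.ofReal (D * 4 ^ n) * (V1 * M)) * ((2:ℝ≥0∞)⁻¹) ^ j := by ring
    _ = ENNReal.ofReal (D * 4 ^ n) * 2 * (V1 * M) := by
        rw [ENNReal.tsum_mul_left, ENNReal.tsum_geometric, ENNReal.one_sub_inv_two, inv_inv]
        ring

/-- for `η ∈ C_c^∞`, the ball average of `|(η(t·))^∨ * g|` is controlled by the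
maximal function of the ball averages of `|g|`. -/
theorem average_conv_le_maximal (n : ℕ) (η : EuclideanSpace ℝ (Fin n) → ℂ)
    (hη : ContDiff ℝ (⊤ : ℕ∞) η) (hηc : HasCompactSupport η) :
    ∃ C : ℝ, 0 < C ∧ ∀ g : EuclideanSpace ℝ (Fin n) → ℂ, Integrable g volume →
      ∀ t ∈ Set.Ioo (0:ℝ) 1, ∀ x,
      (⨍⁻ y in ball x t,
          (‖∫ z, (𝓕⁻ fun ξ => η (t • ξ)) z * g (y - z)‖₊ : ℝ≥0∞) ∂volume) ≤
        ENNReal.ofReal C *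
          maxFn (fun w : EuclideanSpace ℝ (Fin n) => ⨍ z in ball w t, ‖g z‖) x := by
  obtain ⟨D, hD, hker⟩ := kernel_bound η hη hηc
  set V1 : ℝ≥0∞ := volume (ball (0 : EuclideanSpace ℝ (Fin n)) 1) with hV1
  have hV1top : V1 ≠ ⊤ := measure_ball_lt_top.ne
  refine ⟨2 * D * 4 ^ n * V1.toReal + 1, by positivity, ?_⟩
  intro g hgInt t ht x
  set g₀ : EuclideanSpace ℝ (Fin n) → ℂ := hgInt.1.mk g with hg₀
  have hg₀m : Measurable g₀ := hgInt.1.stronglyMeasurable_mk.measurable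
  have hg₀e : g =ᵐ[volume] g₀ := hgInt.1.ae_eq_mk
  have hg₀int : Integrable g₀ volume := hgInt.congr hg₀e
  have ht0 : 0 < t := ht.1
  have hconv : ∀ y, (∫ z, (𝓕⁻ fun ξ => η (t • ξ)) z * g (y - z))
      = ∫ z, (𝓕⁻ fun ξ => η (t • ξ)) z * g₀ (y - z) := by
    intro y
    apply integral_congr_ae
    have hqmp : Measure.QuasiMeasurePreserving
        (fun z : EuclideanSpace ℝ (Fin n) => y - z) volume volume :=
      (Measure.measurePreserving_sub_left volume y).quasiMeasurePreserving
    filter_upwards [hqmp.ae hg₀e] with z hz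
    rw [hz]
  have hmax : maxFn (fun w : EuclideanSpace ℝ (Fin n) => ⨍ z in ball w t, ‖g z‖) x
      = maxFn (fun w : EuclideanSpace ℝ (Fin n) => ⨍ z in ball w t, ‖g₀ z‖) x := by
    have heq : (fun w : EuclideanSpace ℝ (Fin n) => ⨍ z in ball w t, ‖g z‖)
        = fun w => ⨍ z in ball w t, ‖g₀ z‖ := by
      funext w
      apply average_congr
      exact ae_restrict_of_ae (hg₀e.mono fun z hz => by simp [hz])
    rw [heq]
  rw [hmax]
  simp only [hconv]
  set M : ℝ≥0∞ :=
    maxFn (fun w : EuclideanSpace ℝ (Fin n) => ⨍ z in ball w t, ‖g₀ z‖) x with hMdef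
  set K : ℝ≥0∞ := ENNReal.ofReal (D * 4 ^ n) * 2 * (V1 * M) with hK
  have hbd : ∀ y ∈ ball x t,
      (‖∫ z, (𝓕⁻ fun ξ => η (t • ξ)) z * g₀ (y - z)‖₊ : ℝ≥0∞) ≤ K :=
    fun y hy => conv_pointwise_bound g₀ hg₀int hg₀m ht0 hD _ (hker t ht) hy
  have hKC : K ≤ ENNReal.ofReal (2 * D * 4 ^ n * V1.toReal + 1) * M := by
    have h1 : ENNReal.ofReal (D * 4 ^ n) * 2 * V1
        ≤ ENNReal.ofReal (2 * D * 4 ^ n * V1.toReal + 1) := by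
      have h0 : ENNReal.ofReal (D * 4 ^ n) * 2 * V1
          = ENNReal.ofReal (D * 4 ^ n * 2 * V1.toReal) := by
        rw [ENNReal.ofReal_mul (show (0:ℝ) ≤ D * 4 ^ n * 2 by positivity),
          ENNReal.ofReal_mul (show (0:ℝ) ≤ D * 4 ^ n by positivity),
          ENNReal.ofReal_ofNat, ENNReal.ofReal_toReal hV1top]
      rw [h0]
      apply ENNReal.ofReal_le_ofReal
      nlinarith [ENNReal.toReal_nonneg (a := V1), pow_pos (by norm_num : (0:ℝ) < 4) n]
    calc K = (ENNReal.ofReal (D * 4 ^ n) * 2 * V1) * M := by rw [hK]; ring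
      _ ≤ ENNReal.ofReal (2 * D * 4 ^ n * V1.toReal + 1) * M := mul_le_mul_left h1 _
  calc (⨍⁻ y in ball x t,
        (‖∫ z, (𝓕⁻ fun ξ => η (t • ξ)) z * g₀ (y - z)‖₊ : ℝ≥0∞) ∂volume) ≤ K := by
        rw [setLAverage_eq]
        apply ENNReal.div_le_of_le_mul
        calc ∫⁻ y in ball x t,
              (‖∫ z, (𝓕⁻ fun ξ => η (t • ξ)) z * g₀ (y - z)‖₊ : ℝ≥0∞) ∂volume
            ≤ ∫⁻ _ in ball x t, K ∂volume := setLIntegral_mono' measurableSet_ball hbd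
          _ = K * volume (ball x t) := setLIntegral_const _ _
    _ ≤ ENNReal.ofReal (2 * D * 4 ^ n * V1.toReal + 1) * M := hKC
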